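/- (The α-Lemma.) Let w be a weight on ℝ with w^{-1} also a weight, and suppose [w]_{A_2} := sup_{I∈D} ⟨w⟩_I ⟨w^{-1}⟩_I < ∞. For α > 0 define, for I ∈ D, μ_I := ⟨w⟩_I^α ⟨w^{-1}⟩_I^α |I| ( |Δ_I w|²/⟨w⟩_I² + |Δ_I w^{-1}|²/⟨w^{-1}⟩_I² ). Then there is a constant C_α depending only on α (for 0 < α < 1/2 one may take C_α = 72/(α − 2α²), and in general C_α = max{72/(α−2α²), 576} interpreted as 576 when α ≥ 1/2) such that {μ_I}_{I∈D} is a Carleson sequence with intensity at most C_α [w]_{A_2}^α, i.e., ∑_{I∈D(J)} μ_I ≤ C_α [w]_{A_2}^α |J| for all J ∈ D. -/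

import Mathlib

/-!
For `0 < α ≤ 1/4` the Bellman function `B(I) = |I| ⟨w⟩_I^α ⟨w⁻¹⟩_I^α` satisfies
`(α/64) μ_I + B(I_l) + B(I_r) ≤ B(I)`: writing the children's averages as `u(1 ± x)`, `v(1 ± y)`,
this is the two-point inequality
`((1+x)(1+y))^α + ((1-x)(1-y))^α ≤ 2 - (α/8)(x² + y²)`, itself a consequence of the
quantitative AM-GM bound `t^β ≤ 1 + β(t-1) - (β/16)(t-1)²` applied to `√((1±x)(1±y))`.
Telescoping over the dyadic subtree of `J` gives `∑_{I ⊆ J} μ_I ≤ (64/α) B(J) ≤ (64/α) [w]^α |J|`.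
For `α > 1/4`, the bound `μ_I^{(α)} ≤ [w]^{α - 1/4} μ_I^{(1/4)}` reduces to the case `α = 1/4`.
-/

open MeasureTheory ENNReal

noncomputable section

/-- Average of `f` over a set `I ⊆ ℝ` with respect to Lebesgue measure. -/
def iAvg (I : Set ℝ) (f : ℝ → ℝ) : ℝ :=
  (volume I).toReal⁻¹ * ∫ x in I, f x

/-- A weight on `ℝ`: locally integrable and a.e. positive. -/
def IsWeight1 (w : ℝ → ℝ) : Prop :=
  MeasureTheory.LocallyIntegrable w volume ∧ ∀ᵐ x : ℝ, 0 < w x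

/-- The standard dyadic interval `[k 2^{-j}, (k+1) 2^{-j})`. -/
def dyadInt (j k : ℤ) : Set ℝ :=
  Set.Ico ((k : ℝ) * (2:ℝ) ^ (-j)) (((k : ℝ) + 1) * (2:ℝ) ^ (-j))

/-- `Δ_I g = ⟨g⟩_{I_r} - ⟨g⟩_{I_l}` for the dyadic interval `I` of parameters `(j,k)`. -/
def deltaD (j k : ℤ) (g : ℝ → ℝ) : ℝ :=
  iAvg (dyadInt (j + 1) (2 * k + 1)) g - iAvg (dyadInt (j + 1) (2 * k)) g

/-- The dyadic `A₂` characteristic `[w]_{A₂} = sup_{I ∈ D} ⟨w⟩_I ⟨w⁻¹⟩_I`. -/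
def dA2Const (w : ℝ → ℝ) : ℝ≥0∞ :=
  ⨆ p : ℤ × ℤ, ENNReal.ofReal
    (iAvg (dyadInt p.1 p.2) w * iAvg (dyadInt p.1 p.2) (fun x => (w x)⁻¹))

/-- The sequence `μ_I` of the α-Lemma. -/
def muSeq (w : ℝ → ℝ) (α : ℝ) (j k : ℤ) : ℝ :=
  (iAvg (dyadInt j k) w) ^ α * (iAvg (dyadInt j k) (fun x => (w x)⁻¹)) ^ α *
    (volume (dyadInt j k)).toReal *
    ((deltaD j k w) ^ 2 / (iAvg (dyadInt j k) w) ^ 2 +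
      (deltaD j k (fun x => (w x)⁻¹)) ^ 2 / (iAvg (dyadInt j k) (fun x => (w x)⁻¹)) ^ 2)


lemma Finset.sum_union_le_add {ι M : Type*} [DecidableEq ι] [AddCommMonoid M] [PartialOrder M]
    [IsOrderedAddMonoid M] {f : ι → M} {s t : Finset ι} (hf : ∀ i ∈ s ∩ t, 0 ≤ f i) :
    ∑ i ∈ s ∪ t, f i ≤ ∑ i ∈ s, f i + ∑ i ∈ t, f i := by
  rw [← Finset.sum_union_inter]
  exact le_add_of_nonneg_right (Finset.sum_nonneg hf)

lemma rpow_le_one_add_mul_sub_sq {β t : ℝ} (hβ0 : 0 < β) (hβ : β ≤ 1 / 2) (ht0 : 0 ≤ t)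
    (ht9 : t ≤ 9) : t ^ β ≤ 1 + β * (t - 1) - β / 16 * (t - 1) ^ 2 := by
  obtain ⟨s, hs0, rfl⟩ : ∃ s, 0 ≤ s ∧ t = s ^ 2 :=
    ⟨√t, Real.sqrt_nonneg t, (Real.sq_sqrt ht0).symm⟩
  have hs3 : s ≤ 3 := by nlinarith
  have hamgm : (s ^ 2) ^ β ≤ 2 * β * s + (1 - 2 * β) := by
    calc (s ^ 2) ^ β = s ^ (2 * β) * 1 ^ (1 - 2 * β) := by
          rw [Real.one_rpow, mul_one, ← Real.rpow_natCast_mul hs0]; norm_num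
      _ ≤ 2 * β * s + (1 - 2 * β) * 1 :=
          Real.geom_mean_le_arith_mean2_weighted (by linarith) (by linarith) hs0 zero_le_one
            (by ring)
      _ = 2 * β * s + (1 - 2 * β) := by ring
  -- AM-GM falls short of the claim by `(β/16)(s-1)²(16 - (s+1)²)`, nonnegative as `s ≤ 3`.
  have hquartic : 0 ≤ β * (s - 1) ^ 2 * (16 - (s + 1) ^ 2) := by
    have : 0 ≤ 16 - (s + 1) ^ 2 := by nlinarith
    positivity
  nlinarith

lemma add_le_two_sub_sq_sub_div_four {s t x y : ℝ} (hx : |x| ≤ 1) (hy : |y| ≤ 1)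
    (hs2 : s ^ 2 = (1 + x) * (1 + y)) (ht2 : t ^ 2 = (1 - x) * (1 - y)) :
    s + t ≤ 2 - (x - y) ^ 2 / 4 := by
  obtain ⟨hx1, hx2⟩ := abs_le.1 hx
  obtain ⟨hy1, hy2⟩ := abs_le.1 hy
  have hst : s * t ≤ 1 - (x ^ 2 + y ^ 2) / 2 := by
    have h : (s * t) ^ 2 ≤ (1 - (x ^ 2 + y ^ 2) / 2) ^ 2 := by
      rw [mul_pow, hs2, ht2]; nlinarith [sq_nonneg (x ^ 2 - y ^ 2)]
    exact (abs_le_of_sq_le_sq' h (by nlinarith)).2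
  have h : (s + t) ^ 2 ≤ (2 - (x - y) ^ 2 / 4) ^ 2 := by nlinarith [sq_nonneg ((x - y) ^ 2)]
  exact (abs_le_of_sq_le_sq' h (by nlinarith)).2

lemma sq_add_le_sq_sub {s t x y : ℝ} (hs : 0 ≤ s) (ht : 0 ≤ t) (hx : |x| ≤ 1) (hy : |y| ≤ 1)
    (hs2 : s ^ 2 = (1 + x) * (1 + y)) (ht2 : t ^ 2 = (1 - x) * (1 - y)) :
    (x + y) ^ 2 ≤ (s - t) ^ 2 := by
  have hsum : s + t ≤ 2 := by
    linarith [add_le_two_sub_sq_sub_div_four hx hy hs2 ht2, sq_nonneg (x - y)]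
  have hprod : (s - t) ^ 2 * (s + t) ^ 2 = 4 * (x + y) ^ 2 := by
    rw [← mul_pow, show (s - t) * (s + t) = s ^ 2 - t ^ 2 by ring, hs2, ht2]; ring
  nlinarith [mul_le_mul_of_nonneg_left (show (s + t) ^ 2 ≤ 4 by nlinarith) (sq_nonneg (s - t))]

theorem rpow_add_rpow_le_two_sub {α x y : ℝ} (hα0 : 0 < α) (hα : α ≤ 1 / 4) (hx : |x| ≤ 1)
    (hy : |y| ≤ 1) :
    ((1 + x) * (1 + y)) ^ α + ((1 - x) * (1 - y)) ^ α ≤ 2 - α / 8 * (x ^ 2 + y ^ 2) := by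
  obtain ⟨hx1, hx2⟩ := abs_le.1 hx
  obtain ⟨hy1, hy2⟩ := abs_le.1 hy
  obtain ⟨s, hs, hs2⟩ : ∃ s, 0 ≤ s ∧ s ^ 2 = (1 + x) * (1 + y) :=
    ⟨_, Real.sqrt_nonneg _, Real.sq_sqrt (by nlinarith)⟩
  obtain ⟨t, ht, ht2⟩ : ∃ t, 0 ≤ t ∧ t ^ 2 = (1 - x) * (1 - y) :=
    ⟨_, Real.sqrt_nonneg _, Real.sq_sqrt (by nlinarith)⟩
  have hsum := add_le_two_sub_sq_sub_div_four hx hy hs2 ht2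
  have hdiff := sq_add_le_sq_sub hs ht hx hy hs2 ht2
  have hs' := rpow_le_one_add_mul_sub_sq (β := 2 * α) (by linarith) (by linarith) hs
    (by nlinarith)
  have ht' := rpow_le_one_add_mul_sub_sq (β := 2 * α) (by linarith) (by linarith) ht
    (by nlinarith)
  rw [← hs2, ← ht2, ← Real.rpow_natCast_mul hs, ← Real.rpow_natCast_mul ht]
  push_cast
  linarith [mul_le_mul_of_nonneg_left hsum (by linarith : (0:ℝ) ≤ 2 * α),
    mul_le_mul_of_nonneg_left hdiff hα0.le, mul_nonneg hα0.le (sq_nonneg (s + t - 2)),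
    mul_nonneg hα0.le (sq_nonneg (x - y))]

lemma exists_abs_le_one_of_add_eq {a b u : ℝ} (ha : 0 < a) (hb : 0 < b) (h : a + b = 2 * u) :
    ∃ x, |x| ≤ 1 ∧ a = u * (1 - x) ∧ b = u * (1 + x) := by
  have hu : 0 < u := by linarith
  refine ⟨(b - a) / (2 * u), abs_le.2 ⟨?_, ?_⟩, ?_, ?_⟩
  · rw [le_div_iff₀ (by positivity)]; linarith
  · rw [div_le_one (by positivity)]; linarith
  · field_simp; linarith
  · field_simp; linarith

theorem bellman_ineq {α u v ul ur vl vr : ℝ} (hα0 : 0 < α) (hα : α ≤ 1 / 4)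
    (hul : 0 < ul) (hur : 0 < ur) (hvl : 0 < vl) (hvr : 0 < vr)
    (hu : ul + ur = 2 * u) (hv : vl + vr = 2 * v) :
    α / 64 * (u ^ α * v ^ α * ((ur - ul) ^ 2 / u ^ 2 + (vr - vl) ^ 2 / v ^ 2)) +
      (ul ^ α * vl ^ α + ur ^ α * vr ^ α) / 2 ≤ u ^ α * v ^ α := by
  have hu0 : 0 < u := by linarith
  have hv0 : 0 < v := by linarith
  obtain ⟨x, hx, rfl, rfl⟩ := exists_abs_le_one_of_add_eq hul hur hu
  obtain ⟨y, hy, rfl, rfl⟩ := exists_abs_le_one_of_add_eq hvl hvr hv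
  obtain ⟨hx1, hx2⟩ := abs_le.1 hx
  obtain ⟨hy1, hy2⟩ := abs_le.1 hy
  have hsplit : ∀ a b : ℝ, 0 ≤ a → 0 ≤ b →
      (u * a) ^ α * (v * b) ^ α = u ^ α * v ^ α * (a * b) ^ α := fun a b ha hb => by
    rw [Real.mul_rpow hu0.le ha, Real.mul_rpow hv0.le hb, Real.mul_rpow ha hb]; ring
  rw [hsplit _ _ (by linarith) (by linarith), hsplit _ _ (by linarith) (by linarith)]
  have hsq : (u * (1 + x) - u * (1 - x)) ^ 2 / u ^ 2 + (v * (1 + y) - v * (1 - y)) ^ 2 / v ^ 2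
      = 4 * (x ^ 2 + y ^ 2) := by
    field_simp; ring
  rw [hsq]
  have hB := rpow_add_rpow_le_two_sub hα0 hα hx hy
  have huv : 0 < u ^ α * v ^ α := by positivity
  nlinarith [mul_le_mul_of_nonneg_left hB huv.le]

lemma volume_dyadInt (j k : ℤ) : volume (dyadInt j k) = ENNReal.ofReal (2 ^ (-j)) := by
  rw [dyadInt, Real.volume_Ico]
  ring_nf

lemma volume_dyadInt_toReal (j k : ℤ) : (volume (dyadInt j k)).toReal = 2 ^ (-j) := by
  rw [volume_dyadInt, ENNReal.toReal_ofReal (by positivity)]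

lemma two_zpow_neg_add_one (j : ℤ) : (2 : ℝ) ^ (-(j + 1)) = 2 ^ (-j) / 2 := by
  rw [neg_add, zpow_add₀ two_ne_zero, zpow_neg_one, div_eq_mul_inv]

lemma dyadInt_eq_union (j k : ℤ) :
    dyadInt j k = dyadInt (j + 1) (2 * k) ∪ dyadInt (j + 1) (2 * k + 1) := by
  have h := two_zpow_neg_add_one j
  have hpos : (0 : ℝ) < 2 ^ (-j) := by positivity
  simp only [dyadInt, Int.cast_add, Int.cast_mul, Int.cast_ofNat, Int.cast_one, h]
  rw [Set.Ico_union_Ico_eq_Ico (by nlinarith) (by nlinarith)]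
  congr 1 <;> ring

lemma disjoint_dyadInt_children (j k : ℤ) :
    Disjoint (dyadInt (j + 1) (2 * k)) (dyadInt (j + 1) (2 * k + 1)) := by
  simp only [dyadInt, Int.cast_add, Int.cast_mul, Int.cast_ofNat, Int.cast_one]
  exact Set.Ico_disjoint_Ico_same

lemma exists_of_dyadInt_subset {j k j' k' : ℤ} (h : dyadInt j' k' ⊆ dyadInt j k) :
    ∃ n : ℕ, j' = j + n ∧ k * 2 ^ n ≤ k' ∧ k' < (k + 1) * 2 ^ n := by
  have hp' : (0 : ℝ) < 2 ^ (-j') := by positivity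
  have hp : (0 : ℝ) < 2 ^ (-j) := by positivity
  obtain ⟨hlow, hhigh⟩ := (Set.Ico_subset_Ico_iff (by nlinarith)).1 h
  have hj : j ≤ j' := by
    have hlen : (2 : ℝ) ^ (-j') ≤ 2 ^ (-j) := by nlinarith
    have := (zpow_le_zpow_iff_right₀ (by norm_num : (1 : ℝ) < 2)).1 hlen
    omega
  obtain ⟨n, rfl⟩ : ∃ n : ℕ, j' = j + n := ⟨(j' - j).toNat, by omega⟩
  have hscale : (2 : ℝ) ^ (-j) = 2 ^ n * 2 ^ (-(j + n)) := by
    rw [← zpow_natCast, ← zpow_add₀ two_ne_zero]; ring_nf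
  rw [hscale] at hlow hhigh
  refine ⟨n, rfl, ?_, ?_⟩
  · exact_mod_cast (show (k : ℝ) * 2 ^ n ≤ k' by nlinarith)
  · have : (k' : ℝ) + 1 ≤ (k + 1) * 2 ^ n := by nlinarith
    have : k' + 1 ≤ (k + 1) * 2 ^ n := by exact_mod_cast this
    omega

lemma MeasureTheory.LocallyIntegrable.integrableOn_dyadInt {f : ℝ → ℝ} (hf : LocallyIntegrable f)
    (j k : ℤ) : IntegrableOn f (dyadInt j k) :=
  (hf.integrableOn_isCompact isCompact_Icc).mono_set Set.Ico_subset_Icc_self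

lemma iAvg_dyadInt_children {f : ℝ → ℝ} (hf : LocallyIntegrable f) (j k : ℤ) :
    iAvg (dyadInt (j + 1) (2 * k)) f + iAvg (dyadInt (j + 1) (2 * k + 1)) f
      = 2 * iAvg (dyadInt j k) f := by
  have hint : ∫ x in dyadInt j k, f x
      = (∫ x in dyadInt (j + 1) (2 * k), f x) + ∫ x in dyadInt (j + 1) (2 * k + 1), f x := by
    rw [dyadInt_eq_union j k]
    exact setIntegral_union (disjoint_dyadInt_children j k) measurableSet_Ico
      (hf.integrableOn_dyadInt _ _) (hf.integrableOn_dyadInt _ _)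
  simp only [iAvg, hint, volume_dyadInt_toReal, two_zpow_neg_add_one]
  have : (0 : ℝ) < 2 ^ (-j) := by positivity
  field_simp

lemma IsWeight1.iAvg_pos {w : ℝ → ℝ} (hw : IsWeight1 w) (j k : ℤ) :
    0 < iAvg (dyadInt j k) w := by
  have hI : 0 < volume (dyadInt j k) := by
    rw [volume_dyadInt]; exact ENNReal.ofReal_pos.2 (by positivity)
  have hint : 0 < ∫ x in dyadInt j k, w x := by
    rw [integral_pos_iff_support_of_nonneg_ae (ae_restrict_of_ae (hw.2.mono fun _ h => h.le))
      (hw.1.integrableOn_dyadInt j k)]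
    have hsupp : ∀ᵐ x ∂volume.restrict (dyadInt j k), x ∈ Function.support w :=
      ae_restrict_of_ae (hw.2.mono fun _ h => h.ne')
    rwa [measure_congr (ae_eq_univ.2 hsupp : Function.support w =ᵐ[_] Set.univ),
      Measure.restrict_apply_univ]
  exact mul_pos (inv_pos.2 (ENNReal.toReal_pos hI.ne' (by simp [volume_dyadInt]))) hint

def bellmanSeq (w : ℝ → ℝ) (α : ℝ) (j k : ℤ) : ℝ :=
  (volume (dyadInt j k)).toReal *
    (iAvg (dyadInt j k) w ^ α * iAvg (dyadInt j k) (fun x => (w x)⁻¹) ^ α)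

section Weight

variable {w : ℝ → ℝ} (hw : IsWeight1 w) (hw' : IsWeight1 (fun x => (w x)⁻¹))
include hw hw'

lemma bellmanSeq_nonneg (α : ℝ) (j k : ℤ) : 0 ≤ bellmanSeq w α j k := by
  have := hw.iAvg_pos j k
  have := hw'.iAvg_pos j k
  unfold bellmanSeq
  positivity

lemma muSeq_nonneg (α : ℝ) (j k : ℤ) : 0 ≤ muSeq w α j k := by
  have := hw.iAvg_pos j k
  have := hw'.iAvg_pos j k
  unfold muSeq
  positivity

lemma muSeq_add_bellmanSeq_children_le {α : ℝ} (hα0 : 0 < α) (hα : α ≤ 1 / 4) (j k : ℤ) :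
    α / 64 * muSeq w α j k + bellmanSeq w α (j + 1) (2 * k) + bellmanSeq w α (j + 1) (2 * k + 1)
      ≤ bellmanSeq w α j k := by
  have hineq := bellman_ineq hα0 hα (hw.iAvg_pos _ _) (hw.iAvg_pos _ _) (hw'.iAvg_pos _ _)
    (hw'.iAvg_pos _ _) (iAvg_dyadInt_children hw.1 j k) (iAvg_dyadInt_children hw'.1 j k)
  have hL : (0 : ℝ) ≤ 2 ^ (-j) := by positivity
  simp only [muSeq, bellmanSeq, deltaD, volume_dyadInt_toReal, two_zpow_neg_add_one]
  linarith [mul_le_mul_of_nonneg_left hineq hL]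

end Weight

-- The first `N` generations of `D(dyadInt j k)`.
def dyadTree : ℕ → ℤ → ℤ → Finset (ℤ × ℤ)
  | 0, _, _ => ∅
  | N + 1, j, k => insert (j, k) (dyadTree N (j + 1) (2 * k) ∪ dyadTree N (j + 1) (2 * k + 1))

lemma mem_dyadTree {N n : ℕ} {j k k' : ℤ} (hn : n < N) (hk : k * 2 ^ n ≤ k')
    (hk' : k' < (k + 1) * 2 ^ n) : (j + n, k') ∈ dyadTree N j k := by
  induction N generalizing n j k with
  | zero => omega
  | succ N ih =>
    rw [dyadTree, Finset.mem_insert, Finset.mem_union]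
    cases n with
    | zero =>
      left
      simp only [pow_zero, mul_one] at hk hk'
      simp only [CharP.cast_eq_zero, add_zero, Prod.mk.injEq, true_and]
      omega
    | succ n =>
      right
      have hj : j + ↑(n + 1) = j + 1 + ↑n := by push_cast; ring
      rw [hj]
      rw [pow_succ] at hk hk'
      rcases lt_or_ge k' ((2 * k + 1) * 2 ^ n) with h | h
      · exact Or.inl (ih (by omega) (by linarith) h)
      · exact Or.inr (ih (by omega) h (by linarith))

lemma sum_dyadTree_succ_le {f : ℤ × ℤ → ℝ} (hf : 0 ≤ f) (N : ℕ) (j k : ℤ) :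
    ∑ p ∈ dyadTree (N + 1) j k, f p
      ≤ f (j, k) + ∑ p ∈ dyadTree N (j + 1) (2 * k), f p
          + ∑ p ∈ dyadTree N (j + 1) (2 * k + 1), f p := by
  rw [dyadTree, Finset.insert_eq, add_assoc, ← Finset.sum_singleton f (j, k)]
  refine (Finset.sum_union_le_add fun p _ => hf p).trans (add_le_add_right ?_ _)
  exact Finset.sum_union_le_add fun p _ => hf p

lemma sum_muSeq_dyadTree_le {w : ℝ → ℝ} (hw : IsWeight1 w) (hw' : IsWeight1 (fun x => (w x)⁻¹))
    {α : ℝ} (hα0 : 0 < α) (hα : α ≤ 1 / 4) (N : ℕ) (j k : ℤ) :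
    α / 64 * ∑ p ∈ dyadTree N j k, muSeq w α p.1 p.2 ≤ bellmanSeq w α j k := by
  induction N generalizing j k with
  | zero => simpa [dyadTree] using bellmanSeq_nonneg hw hw' α j k
  | succ N ih =>
    have hsplit := sum_dyadTree_succ_le (f := fun p => muSeq w α p.1 p.2)
      (fun p => muSeq_nonneg hw hw' α p.1 p.2) N j k
    have hstep := muSeq_add_bellmanSeq_children_le hw hw' hα0 hα j k
    nlinarith [ih (j + 1) (2 * k), ih (j + 1) (2 * k + 1)]

lemma exists_subset_dyadTree {j k : ℤ} (S : Finset (ℤ × ℤ))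
    (hS : ∀ p ∈ S, dyadInt p.1 p.2 ⊆ dyadInt j k) : ∃ N, S ⊆ dyadTree N j k := by
  refine ⟨S.sup (fun p => (p.1 - j).toNat) + 1, fun p hp => ?_⟩
  obtain ⟨n, hj, hk, hk'⟩ := exists_of_dyadInt_subset (hS p hp)
  have hn : (p.1 - j).toNat ≤ S.sup (fun p => (p.1 - j).toNat) :=
    Finset.le_sup (f := fun p : ℤ × ℤ => (p.1 - j).toNat) hp
  rw [show p = (j + n, p.2) from Prod.ext hj rfl]
  exact mem_dyadTree (by omega) hk hk'

lemma iAvg_mul_iAvg_inv_le_dA2Const {w : ℝ → ℝ} (hA2 : dA2Const w ≠ ⊤) (j k : ℤ) :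
    iAvg (dyadInt j k) w * iAvg (dyadInt j k) (fun x => (w x)⁻¹) ≤ (dA2Const w).toReal :=
  (ENNReal.ofReal_le_iff_le_toReal hA2).1 <| le_iSup (fun p : ℤ × ℤ => ENNReal.ofReal
    (iAvg (dyadInt p.1 p.2) w * iAvg (dyadInt p.1 p.2) (fun x => (w x)⁻¹))) (j, k)

section ProductBound

variable {w : ℝ → ℝ} (hw : IsWeight1 w) (hw' : IsWeight1 (fun x => (w x)⁻¹)) {Q : ℝ} {j k : ℤ}
  (hQ : iAvg (dyadInt j k) w * iAvg (dyadInt j k) (fun x => (w x)⁻¹) ≤ Q)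
include hw hw' hQ

lemma muSeq_le_rpow_mul_muSeq {α β : ℝ} (hβα : β ≤ α) :
    muSeq w α j k ≤ Q ^ (α - β) * muSeq w β j k := by
  have hu := hw.iAvg_pos j k
  have hv := hw'.iAvg_pos j k
  have hsplit : ∀ a : ℝ, 0 < a → a ^ α = a ^ (α - β) * a ^ β := fun a ha => by
    rw [← Real.rpow_add ha, sub_add_cancel]
  have hfactor : muSeq w α j k = (iAvg (dyadInt j k) w * iAvg (dyadInt j k) (fun x => (w x)⁻¹))
      ^ (α - β) * muSeq w β j k := by
    simp only [muSeq]
    rw [hsplit _ hu, hsplit _ hv, Real.mul_rpow hu.le hv.le]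
    ring
  rw [hfactor]
  gcongr
  exact muSeq_nonneg hw hw' β j k

lemma bellmanSeq_le {β : ℝ} (hβ : 0 ≤ β) :
    bellmanSeq w β j k ≤ (volume (dyadInt j k)).toReal * Q ^ β := by
  have hu := hw.iAvg_pos j k
  have hv := hw'.iAvg_pos j k
  rw [bellmanSeq, ← Real.mul_rpow hu.le hv.le]
  gcongr

end ProductBound

theorem sum_muSeq_le {w : ℝ → ℝ} (hw : IsWeight1 w) (hw' : IsWeight1 (fun x => (w x)⁻¹))
    (hA2 : dA2Const w ≠ ⊤) {α : ℝ} (hα : 0 < α) {j k : ℤ} (S : Finset (ℤ × ℤ))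
    (hS : ∀ p ∈ S, dyadInt p.1 p.2 ⊆ dyadInt j k) :
    ∑ p ∈ S, muSeq w α p.1 p.2
      ≤ 64 / min α (1 / 4) * (dA2Const w).toReal ^ α * (volume (dyadInt j k)).toReal := by
  set β := min α (1 / 4)
  have hβ0 : 0 < β := lt_min hα (by norm_num)
  set Q := (dA2Const w).toReal
  have hQ := iAvg_mul_iAvg_inv_le_dA2Const hA2
  obtain ⟨N, hN⟩ := exists_subset_dyadTree S hS
  have htree : ∑ p ∈ dyadTree N j k, muSeq w β p.1 p.2 ≤ 64 / β * bellmanSeq w β j k := by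
    rw [div_mul_eq_mul_div, le_div_iff₀ hβ0]
    linarith [sum_muSeq_dyadTree_le hw hw' hβ0 (min_le_right _ _) N j k]
  calc ∑ p ∈ S, muSeq w α p.1 p.2
      ≤ ∑ p ∈ S, Q ^ (α - β) * muSeq w β p.1 p.2 :=
        Finset.sum_le_sum fun p _ => muSeq_le_rpow_mul_muSeq hw hw' (hQ _ _) (min_le_left _ _)
    _ ≤ Q ^ (α - β) * ∑ p ∈ dyadTree N j k, muSeq w β p.1 p.2 := by
        rw [← Finset.mul_sum]
        gcongr
        exact fun p _ _ => muSeq_nonneg hw hw' β p.1 p.2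
    _ ≤ Q ^ (α - β) * (64 / β * ((volume (dyadInt j k)).toReal * Q ^ β)) := by
        gcongr
        exact htree.trans (by gcongr; exact bellmanSeq_le hw hw' (hQ j k) hβ0.le)
    _ = 64 / β * Q ^ α * (volume (dyadInt j k)).toReal := by
        rw [show Q ^ α = Q ^ (α - β) * Q ^ β by
          rw [← Real.rpow_add' ENNReal.toReal_nonneg (by simpa using hα.ne'), sub_add_cancel]]
        ring

/-- **the α-Lemma.** If `w ∈ A₂` (dyadic) and `α > 0`, then there is a
constant `C_α`, depending only on `α`, such that `{μ_I}_{I∈D}` is a Carleson sequence with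
intensity at most `C_α [w]_{A₂}^α`: for all `J ∈ D`,
`∑_{I ∈ D(J)} μ_I ≤ C_α [w]_{A₂}^α |J|`. -/
theorem alpha_lemma (α : ℝ) (hα : 0 < α) :
    ∃ Cα : ℝ, 0 < Cα ∧
      ∀ w : ℝ → ℝ, IsWeight1 w → IsWeight1 (fun x => (w x)⁻¹) → dA2Const w < ⊤ →
        ∀ j k : ℤ,
          ∑' q : {p : ℤ × ℤ // dyadInt p.1 p.2 ⊆ dyadInt j k},
              ENNReal.ofReal (muSeq w α q.1.1 q.1.2)
            ≤ ENNReal.ofReal Cα * dA2Const w ^ α * volume (dyadInt j k) := by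
  refine ⟨64 / min α (1 / 4), by positivity, fun w hw hw' hA2 j k => ?_⟩
  refine ENNReal.summable.tsum_le_of_sum_le fun S => ?_
  have hbound := sum_muSeq_le hw hw' hA2.ne hα (j := j) (k := k)
    (S.map (Function.Embedding.subtype _)) (by simp +contextual)
  rw [Finset.sum_map] at hbound
  rw [← ENNReal.ofReal_sum_of_nonneg fun q _ => muSeq_nonneg hw hw' α q.1.1 q.1.2]
  refine (ENNReal.ofReal_le_ofReal hbound).trans_eq ?_
  rw [ENNReal.ofReal_mul (by positivity), ENNReal.ofReal_mul (by positivity),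
    ENNReal.toReal_rpow, ENNReal.ofReal_toReal (ENNReal.rpow_ne_top_of_nonneg hα.le hA2.ne),
    ENNReal.ofReal_toReal (by simp [volume_dyadInt])]

end
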